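/- Let γ > 0 and ξ, w ∈ ℝ, and define h(t) = e^{iπt} (sin πt)^{−1} e^{−γ t²/2 + ξ t + iπ w t} for complex t with t ∉ ℤ. Then both integrals below converge absolutely, and (1/(2πi)) ( ∫_ℝ h(x − i/2) dx − ∫_ℝ h(x + i/2) dx ) = (1/π) θ( (πw − iξ)/(2π), iγ/(2π) ), where θ(z,τ) = Σ_{n∈ℤ} e^{iπ n² τ + 2πi n z} is the Jacobi theta function; equivalently, the left-hand side equals (1/π) Σ_{n∈ℤ} e^{−γ n²/2 + ξ n + iπ w n}. -/

import Mathlib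

open Complex MeasureTheory

noncomputable section

/-- The integrand `h(t) = e^{iπt} (sin πt)⁻¹ e^{-γt²/2 + ξt + iπwt}`. -/
def hFun (γ ξ w : ℝ) (t : ℂ) : ℂ :=
  Complex.exp (I * (Real.pi : ℂ) * t) / Complex.sin ((Real.pi : ℂ) * t) *
    Complex.exp (-(γ : ℂ) * t ^ 2 / 2 + (ξ : ℂ) * t + I * (Real.pi : ℂ) * (w : ℂ) * t)

open Real

namespace StripContourAux

lemma norm_cexp_eq (z : ℂ) : ‖cexp z‖ = rexp z.re := by
  rw [Complex.norm_exp]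

lemma sin_pi_ne (t : ℂ) (ht : t.im ≠ 0) : Complex.sin ((π:ℂ)*t) ≠ 0 := by
  rw [Complex.sin_ne_zero_iff]
  intro k hk
  apply ht
  have hπ : (π:ℂ) ≠ 0 := ofReal_ne_zero.mpr pi_ne_zero
  have : t = (k:ℂ) := mul_left_cancel₀ hπ (by rw [hk]; ring)
  rw [this]; simp

lemma norm_q (t : ℂ) : ‖cexp (-2*(π:ℂ)*I*t)‖ = rexp (2*π*t.im) := by
  rw [norm_cexp_eq]; congr 1; simp [Complex.mul_re, Complex.mul_im]

lemma norm_r (t : ℂ) : ‖cexp (2*(π:ℂ)*I*t)‖ = rexp (-(2*π*t.im)) := by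
  rw [norm_cexp_eq]; congr 1; simp [Complex.mul_re, Complex.mul_im]

lemma one_sub_q_ne (t : ℂ) (ht : t.im ≠ 0) : 1 - cexp (-2*(π:ℂ)*I*t) ≠ 0 := by
  intro h
  have h2 : cexp (-2*(π:ℂ)*I*t) = 1 := (sub_eq_zero.mp h).symm
  have hn := norm_q t
  rw [h2] at hn
  simp only [norm_one] at hn
  have h3 : 2 * π * t.im = 0 := by
    have h4 : rexp (2*π*t.im) = rexp 0 := by rw [Real.exp_zero]; exact hn.symm
    exact Real.exp_injective h4
  apply ht
  have hπ := pi_pos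
  nlinarith [h3]

lemma key_div (t : ℂ) (ht : t.im ≠ 0) :
    cexp (I*(π:ℂ)*t) / Complex.sin ((π:ℂ)*t) = 2*I / (1 - cexp (-2*(π:ℂ)*I*t)) := by
  rw [div_eq_div_iff (sin_pi_ne t ht) (one_sub_q_ne t ht)]
  have e1 : I*(π:ℂ)*t + -2*(π:ℂ)*I*t = -((π:ℂ)*t)*I := by ring
  have e2 : I*(π:ℂ)*t = ((π:ℂ)*t)*I := by ring
  rw [mul_sub, mul_one, ← Complex.exp_add, e1, e2, Complex.sin]
  linear_combination (cexp (((π:ℂ)*t)*I) - cexp (-((π:ℂ)*t)*I)) * Complex.I_sq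

lemma integral_cexp_shift {b : ℂ} (hb : b.re < 0) (c s : ℂ) :
    ∫ x : ℝ, cexp (b * ((x:ℂ) + s)^2 + c * ((x:ℂ) + s)) =
      ((π:ℂ) / (-b)) ^ (1/2 : ℂ) * cexp (-c^2 / (4*b)) := by
  have hb0 : b ≠ 0 := fun h => by simp [h] at hb
  have h : ∀ x : ℝ, b * ((x:ℂ) + s)^2 + c * ((x:ℂ) + s)
      = b * (x:ℂ)^2 + (2*b*s + c) * (x:ℂ) + (b*s^2 + c*s) := fun x => by ring
  simp_rw [h]
  rw [integral_cexp_quadratic hb]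
  congr 2
  field_simp
  ring

lemma integrable_cexp_shift {b : ℂ} (hb : b.re < 0) (c s : ℂ) :
    Integrable fun x : ℝ => cexp (b * ((x:ℂ) + s)^2 + c * ((x:ℂ) + s)) := by
  have h : ∀ x : ℝ, b * ((x:ℂ) + s)^2 + c * ((x:ℂ) + s)
      = b * (x:ℂ)^2 + (2*b*s + c) * (x:ℂ) + (b*s^2 + c*s) := fun x => by ring
  simp_rw [h]
  exact integrable_cexp_quadratic' hb _ _

lemma norm_term (b c : ℂ) (k : ℝ) (s : ℂ) (x : ℝ) :
    ‖2*I*cexp (b*((x:ℂ)+s)^2 + (c - 2*(π:ℂ)*I*(k:ℂ))*((x:ℂ)+s))‖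
      = rexp (2*π*k*s.im) * ‖2*I*cexp (b*((x:ℂ)+s)^2 + c*((x:ℂ)+s))‖ := by
  have h : b*((x:ℂ)+s)^2 + (c - 2*(π:ℂ)*I*(k:ℂ))*((x:ℂ)+s)
      = (-2*(π:ℂ)*I*(k:ℂ)*((x:ℂ)+s)) + (b*((x:ℂ)+s)^2 + c*((x:ℂ)+s)) := by ring
  have re_aux : (-2*(π:ℂ)*I*(k:ℂ)*((x:ℂ)+s)).re = 2*π*k*s.im := by
    simp [Complex.mul_re, Complex.mul_im]
  rw [h, Complex.exp_add, norm_mul, norm_mul, norm_mul,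
    norm_cexp_eq (-2*(π:ℂ)*I*(k:ℂ)*((x:ℂ)+s)), re_aux, norm_mul]
  simp [Complex.norm_I]
  ring

lemma hFun_lower (γ ξ w : ℝ) (t : ℂ) (ht : t.im = -(1/2)) :
    hFun γ ξ w t = ∑' n : ℕ,
      2*I*cexp ((-(γ:ℂ)/2)*t^2 + (((ξ:ℂ) + I*(π:ℂ)*(w:ℂ)) - 2*(π:ℂ)*I*(n:ℂ))*t) := by
  have ht0 : t.im ≠ 0 := by rw [ht]; norm_num
  have hlt : ‖cexp (-2*(π:ℂ)*I*t)‖ < 1 := by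
    rw [norm_q, ht]
    calc rexp (2*π*(-(1/2))) < rexp 0 := Real.exp_lt_exp.mpr (by nlinarith [pi_pos])
      _ = 1 := Real.exp_zero
  rw [hFun, key_div t ht0, tsum_congr (fun n : ℕ => ?_)]
  · rw [div_eq_mul_inv, ← tsum_geometric_of_norm_lt_one hlt, mul_assoc,
      ← tsum_mul_right, ← tsum_mul_left]
  · rw [← Complex.exp_nat_mul, ← Complex.exp_add]
    congr 2
    ring

lemma hFun_upper (γ ξ w : ℝ) (t : ℂ) (ht : t.im = 1/2) :
    hFun γ ξ w t = ∑' n : ℕ,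
      -(2*I*cexp ((-(γ:ℂ)/2)*t^2 + (((ξ:ℂ) + I*(π:ℂ)*(w:ℂ)) - 2*(π:ℂ)*I*(-(n:ℂ)-1))*t)) := by
  have ht0 : t.im ≠ 0 := by rw [ht]; norm_num
  set r := cexp (2*(π:ℂ)*I*t) with hr
  have hr0 : r ≠ 0 := Complex.exp_ne_zero _
  have hlt : ‖r‖ < 1 := by
    rw [norm_r, ht]
    calc rexp (-(2*π*(1/2))) < rexp 0 := Real.exp_lt_exp.mpr (by nlinarith [pi_pos])
      _ = 1 := Real.exp_zero
  have h1r : 1 - r ≠ 0 := by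
    intro h
    rw [sub_eq_zero] at h
    rw [← h] at hlt
    simp at hlt
  have hq : 1 - cexp (-2*(π:ℂ)*I*t) = -(1-r) * r⁻¹ := by
    rw [show -2*(π:ℂ)*I*t = -(2*(π:ℂ)*I*t) by ring, Complex.exp_neg, ← hr]
    field_simp
    ring
  have hdiv : 2*I/(1 - cexp (-2*(π:ℂ)*I*t)) = (-2*I)*r * (1-r)⁻¹ := by
    rw [hq, div_eq_iff (mul_ne_zero (neg_ne_zero.mpr h1r) (inv_ne_zero hr0))]
    field_simp
  rw [hFun, key_div t ht0, hdiv, tsum_congr (fun n : ℕ => ?_)]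
  · rw [← tsum_geometric_of_norm_lt_one hlt, mul_assoc, ← tsum_mul_right, ← tsum_mul_left]
  · rw [← Complex.exp_nat_mul, ← Complex.exp_add, hr]
    have key : ∀ X Y Z : ℂ, X = Y + Z → -(2*I*cexp X) = -2*I*cexp Y * cexp Z := by
      intro X Y Z h; rw [h, Complex.exp_add]; ring
    apply key
    ring

lemma hFun_integrable (γ ξ w : ℝ) (hγ : 0 < γ) (s : ℂ) (hs : s.im ≠ 0) :
    Integrable fun x : ℝ => hFun γ ξ w ((x:ℂ) + s) := by
  have hb : (-(γ:ℂ)/2).re < 0 := by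
    simp only [neg_div, neg_re, neg_lt_zero]
    rw [show ((γ:ℂ)/2) = ((γ/2 : ℝ) : ℂ) by push_cast; ring, Complex.ofReal_re]
    positivity
  have him : ∀ x : ℝ, ((x:ℂ) + s).im ≠ 0 := fun x => by simpa using hs
  set ρ := rexp (2*π*s.im) with hρ
  have hρ1 : ρ ≠ 1 := by
    rw [hρ]
    intro h
    rw [← Real.exp_zero] at h
    have := Real.exp_injective h
    have hπ := pi_pos
    apply hs; nlinarith
  have hd : 0 < |1 - ρ| := abs_pos.mpr (sub_ne_zero.mpr (Ne.symm hρ1))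
  have hcont : Continuous fun x : ℝ => hFun γ ξ w ((x:ℂ) + s) := by
    have hc : Continuous fun x:ℝ => ((x:ℂ)+s) := Complex.continuous_ofReal.add continuous_const
    apply Continuous.mul
    · apply Continuous.div
      · fun_prop
      · fun_prop
      · exact fun x => sin_pi_ne _ (him x)
    · fun_prop
  apply Integrable.mono'
    (((integrable_cexp_shift hb ((ξ:ℂ) + I*(π:ℂ)*(w:ℂ)) s).norm).const_mul (2/|1-ρ|))
    hcont.aestronglyMeasurable
  refine Filter.Eventually.of_forall fun x => ?_
  set t := (x:ℂ) + s with htdef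
  have hexp : (-(γ:ℂ) * t^2/2 + (ξ:ℂ)*t + I*(π:ℂ)*(w:ℂ)*t)
      = (-(γ:ℂ)/2) * t^2 + ((ξ:ℂ) + I*(π:ℂ)*(w:ℂ)) * t := by ring
  rw [hFun, key_div t (him x), hexp, norm_mul, norm_div]
  have h1q : |1 - ρ| ≤ ‖1 - cexp (-2*(π:ℂ)*I*t)‖ := by
    have h := abs_norm_sub_norm_le (1 : ℂ) (cexp (-2*(π:ℂ)*I*t))
    rw [norm_one, norm_q] at h
    have htim : t.im = s.im := by rw [htdef]; simp
    rw [hρ, ← htim]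
    exact h
  rw [show ‖(2*I : ℂ)‖ = 2 by simp]
  gcongr

end StripContourAux

open StripContourAux

/-- **Theta-function identity:** the contour integral of `h` around the strip
`|Im t| < 1/2` equals `(1/π) θ((πw-iξ)/(2π), iγ/(2π))`. -/
theorem strip_contour_integral_eq_theta
    (γ ξ w : ℝ) (hγ : 0 < γ) :
    Integrable (fun x : ℝ => hFun γ ξ w ((x : ℂ) - I / 2)) ∧
    Integrable (fun x : ℝ => hFun γ ξ w ((x : ℂ) + I / 2)) ∧
    (1 / (2 * (Real.pi : ℂ) * I)) *
        ((∫ x : ℝ, hFun γ ξ w ((x : ℂ) - I / 2)) -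
          ∫ x : ℝ, hFun γ ξ w ((x : ℂ) + I / 2)) =
      (1 / (Real.pi : ℂ)) *
        jacobiTheta₂ (((Real.pi : ℂ) * (w : ℂ) - I * (ξ : ℂ)) / (2 * (Real.pi : ℂ)))
          (I * (γ : ℂ) / (2 * (Real.pi : ℂ))) ∧
    (1 / (2 * (Real.pi : ℂ) * I)) *
        ((∫ x : ℝ, hFun γ ξ w ((x : ℂ) - I / 2)) -
          ∫ x : ℝ, hFun γ ξ w ((x : ℂ) + I / 2)) =
      (1 / (Real.pi : ℂ)) *
        ∑' k : ℤ, Complex.exp (-(γ : ℂ) * (k : ℂ) ^ 2 / 2 + (ξ : ℂ) * (k : ℂ) +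
          I * (Real.pi : ℂ) * (w : ℂ) * (k : ℂ)) := by
  have hπ : (π:ℂ) ≠ 0 := ofReal_ne_zero.mpr pi_ne_zero
  have hγc : (γ:ℂ) ≠ 0 := ofReal_ne_zero.mpr hγ.ne'
  set b : ℂ := -(γ:ℂ)/2 with hbd
  set c : ℂ := (ξ:ℂ) + I*(π:ℂ)*(w:ℂ) with hcd
  have hbre : b.re < 0 := by
    rw [hbd]
    simp only [neg_div, neg_re, neg_lt_zero]
    rw [show ((γ:ℂ)/2) = ((γ/2 : ℝ) : ℂ) by push_cast; ring, Complex.ofReal_re]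
    positivity
  have hb0 : b ≠ 0 := by rw [hbd]; simp [div_eq_zero_iff, hγc]
  set A : ℂ := ((π:ℂ)/(-b)) ^ (1/2 : ℂ) with hAd
  have hA0 : A ≠ 0 := by
    rw [hAd]
    intro h
    rcases (Complex.cpow_eq_zero_iff _ _).mp h with ⟨h1, _⟩
    exact (div_ne_zero hπ (neg_ne_zero.mpr hb0)) h1
  set V : ℤ → ℂ := fun k => 2*I*(A * cexp (-(c - 2*(π:ℂ)*I*(k:ℂ))^2/(4*b))) with hVd
  -- integrability
  have hlowInt : Integrable (fun x : ℝ => hFun γ ξ w ((x:ℂ) - I/2)) := by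
    have h := hFun_integrable γ ξ w hγ (-(I/2)) (by simp)
    simpa [sub_eq_add_neg] using h
  have hupInt : Integrable (fun x : ℝ => hFun γ ξ w ((x:ℂ) + I/2)) := by
    have h := hFun_integrable γ ξ w hγ (I/2) (by simp)
    simpa using h
  -- geometric summability ingredient
  have hgeo : Summable fun n:ℕ => rexp (-(π*n)) := by
    have h1 : ∀ n:ℕ, rexp (-(π*n)) = rexp (-π)^n := fun n => by
      rw [← Real.exp_nat_mul]; congr 1; ring
    refine (summable_geometric_of_lt_one (Real.exp_nonneg _) ?_).congr fun n => (h1 n).symm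
    calc rexp (-π) < rexp 0 := Real.exp_lt_exp.mpr (by nlinarith [pi_pos])
      _ = 1 := Real.exp_zero
  -- LOWER LINE
  set Flow : ℕ → ℝ → ℂ := fun n x =>
    2*I*cexp (b*((x:ℂ) + -(I/2))^2 + (c - 2*(π:ℂ)*I*(n:ℂ))*((x:ℂ) + -(I/2))) with hFlowd
  have hFlowInt : ∀ n, Integrable (Flow n) := fun n =>
    (integrable_cexp_shift hbre _ _).const_mul _
  have hFlowNorm : ∀ (n : ℕ) (x : ℝ), ‖Flow n x‖
      = rexp (-(π*n)) * ‖2*I*cexp (b*((x:ℂ) + -(I/2))^2 + c*((x:ℂ) + -(I/2)))‖ := by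
    intro n x
    have h := norm_term b c (n:ℝ) (-(I/2)) x
    rw [show (((n:ℝ)):ℂ) = (n:ℂ) by norm_cast] at h
    simp only [hFlowd]
    rw [h, show (-(I/2) : ℂ).im = -(1/2) by simp, show 2*π*(n:ℝ)*(-(1/2)) = -(π*n) by ring]
  have hFlowSum : Summable fun n : ℕ => ∫ x : ℝ, ‖Flow n x‖ := by
    have hK : ∀ n : ℕ, ∫ x : ℝ, ‖Flow n x‖
        = rexp (-(π*n)) * ∫ x : ℝ, ‖2*I*cexp (b*((x:ℂ) + -(I/2))^2 + c*((x:ℂ) + -(I/2)))‖ := by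
      intro n
      simp_rw [hFlowNorm n]
      exact integral_const_mul _ _
    exact ((hgeo.mul_right _)).congr fun n => (hK n).symm
  have hlowHS0 := hasSum_integral_of_summable_integral_norm hFlowInt hFlowSum
  have hlowEq : ∫ x : ℝ, hFun γ ξ w ((x:ℂ) - I/2) = ∫ x : ℝ, ∑' n : ℕ, Flow n x := by
    refine integral_congr_ae (Filter.Eventually.of_forall fun x => ?_)
    dsimp only
    rw [sub_eq_add_neg, hFun_lower γ ξ w _ (by simp)]
  have hval : ∀ n:ℕ, ∫ x : ℝ, Flow n x = V (n:ℤ) := by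
    intro n
    simp only [hFlowd]
    rw [integral_const_mul, integral_cexp_shift hbre _ _, ← hAd]
    simp only [hVd]
    push_cast
    ring
  have hIlowV : HasSum (fun n:ℕ => V (n:ℤ)) (∫ x : ℝ, hFun γ ξ w ((x:ℂ) - I/2)) := by
    rw [hlowEq]
    rw [show (fun n:ℕ => V (n:ℤ)) = (fun n:ℕ => ∫ x : ℝ, Flow n x) from funext fun n => (hval n).symm]
    exact hlowHS0
  -- UPPER LINE
  set Fup : ℕ → ℝ → ℂ := fun n x =>
    -(2*I*cexp (b*((x:ℂ) + I/2)^2 + (c - 2*(π:ℂ)*I*(-(n:ℂ)-1))*((x:ℂ) + I/2))) with hFupd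
  have hFupInt : ∀ n, Integrable (Fup n) := fun n =>
    ((integrable_cexp_shift hbre _ _).const_mul _).neg
  have hFupNorm : ∀ (n : ℕ) (x : ℝ), ‖Fup n x‖
      = rexp (-(π*(n+1))) * ‖2*I*cexp (b*((x:ℂ) + I/2)^2 + c*((x:ℂ) + I/2))‖ := by
    intro n x
    have h := norm_term b c (-(n:ℝ)-1) (I/2) x
    rw [show ((-(n:ℝ)-1 : ℝ):ℂ) = -(n:ℂ)-1 by push_cast; ring] at h
    simp only [hFupd, norm_neg]
    rw [h, show (I/2 : ℂ).im = 1/2 by simp, show 2*π*(-(n:ℝ)-1)*(1/2) = -(π*(n+1)) by ring]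
  have hFupSum : Summable fun n : ℕ => ∫ x : ℝ, ‖Fup n x‖ := by
    have hK : ∀ n : ℕ, ∫ x : ℝ, ‖Fup n x‖
        = rexp (-(π*(n+1))) * ∫ x : ℝ, ‖2*I*cexp (b*((x:ℂ) + I/2)^2 + c*((x:ℂ) + I/2))‖ := by
      intro n
      simp_rw [hFupNorm n]
      exact integral_const_mul _ _
    have hgeo' : Summable fun n:ℕ => rexp (-(π*(n+1))) := by
      have h1 : ∀ n:ℕ, rexp (-(π*(n+1))) = rexp (-π) * rexp (-π)^n := fun n => by
        rw [← Real.exp_nat_mul, ← Real.exp_add]; congr 1; push_cast; ring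
      refine (((summable_geometric_of_lt_one (Real.exp_nonneg (-π)) ?_).mul_left
        (rexp (-π)))).congr fun n => (h1 n).symm
      calc rexp (-π) < rexp 0 := Real.exp_lt_exp.mpr (by nlinarith [pi_pos])
        _ = 1 := Real.exp_zero
    exact ((hgeo'.mul_right _)).congr fun n => (hK n).symm
  have hupHS0 := hasSum_integral_of_summable_integral_norm hFupInt hFupSum
  have hupEq : ∫ x : ℝ, hFun γ ξ w ((x:ℂ) + I/2) = ∫ x : ℝ, ∑' n : ℕ, Fup n x := by
    refine integral_congr_ae (Filter.Eventually.of_forall fun x => ?_)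
    dsimp only
    rw [hFun_upper γ ξ w _ (by simp)]
  have hvalUp : ∀ n:ℕ, ∫ x : ℝ, Fup n x = -(V (-((n:ℤ)+1))) := by
    intro n
    simp only [hFupd]
    rw [integral_neg, integral_const_mul, integral_cexp_shift hbre _ _, ← hAd]
    simp only [hVd]
    push_cast
    ring
  have hIupV : HasSum (fun n:ℕ => V (-((n:ℤ)+1))) (-(∫ x : ℝ, hFun γ ξ w ((x:ℂ) + I/2))) := by
    have h := hupHS0.neg
    rw [show (fun n:ℕ => -(∫ x : ℝ, Fup n x)) = (fun n:ℕ => V (-((n:ℤ)+1))) from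
      funext fun n => by rw [hvalUp n, neg_neg]] at h
    rw [hupEq]
    exact h
  have hVsum : HasSum V ((∫ x : ℝ, hFun γ ξ w ((x:ℂ) - I/2))
      + -(∫ x : ℝ, hFun γ ξ w ((x:ℂ) + I/2))) := hIlowV.of_nat_of_neg_add_one hIupV
  have hTsum : ∑' k:ℤ, V k = (∫ x : ℝ, hFun γ ξ w ((x:ℂ) - I/2))
      - (∫ x : ℝ, hFun γ ξ w ((x:ℂ) + I/2)) := by
    rw [sub_eq_add_neg]; exact hVsum.tsum_eq
  -- theta identification
  have hVterm : ∀ k:ℤ, V k =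
      (2*I*(A * cexp (-c^2/(4*b)))) * jacobiTheta₂_term k (c/(2*b)) (-I*(π:ℂ)/b) := by
    intro k
    simp only [hVd, jacobiTheta₂_term]
    rw [show -(c - 2*(π:ℂ)*I*(k:ℂ))^2/(4*b)
        = (-c^2/(4*b)) + (2*(π:ℂ)*I*(k:ℂ)*(c/(2*b)) + (π:ℂ)*I*(k:ℂ)^2*(-I*(π:ℂ)/b)) from by
      field_simp; ring]
    rw [Complex.exp_add]
    ring
  have hTheta' : ∑' k:ℤ, V k =
      (2*I*(A * cexp (-c^2/(4*b)))) * jacobiTheta₂ (c/(2*b)) (-I*(π:ℂ)/b) := by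
    rw [show jacobiTheta₂ (c/(2*b)) (-I*(π:ℂ)/b)
        = ∑' k:ℤ, jacobiTheta₂_term k (c/(2*b)) (-I*(π:ℂ)/b) from rfl, ← tsum_mul_left]
    exact tsum_congr hVterm
  have hfe := jacobiTheta₂_functional_equation (c/(2*b)) (-I*(π:ℂ)/b)
  have e1 : -I * (-I*(π:ℂ)/b) = (π:ℂ)/(-b) := by
    have h : -I * (-I*(π:ℂ)/b) = (I*I)*((π:ℂ)/b) := by ring
    rw [h, Complex.I_mul_I, div_neg]
    ring
  have e2 : -(π:ℂ)*I*(c/(2*b))^2/(-I*(π:ℂ)/b) = c^2/(4*b) := by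
    field_simp
    ring
  have e3 : (c/(2*b))/(-I*(π:ℂ)/b) = -(((π:ℂ)*(w:ℂ) - I*(ξ:ℂ))/(2*(π:ℂ))) := by
    rw [hcd, hbd]
    field_simp
    linear_combination (-(ξ:ℂ)) * Complex.I_sq
  have e4 : -1/(-I*(π:ℂ)/b) = I*(γ:ℂ)/(2*(π:ℂ)) := by
    rw [hbd]
    field_simp
    linear_combination (-1:ℂ) * Complex.I_sq
  rw [e1, e2, e3, e4, jacobiTheta₂_neg_left, ← hAd] at hfe
  have hcc : cexp (-c^2/(4*b)) * cexp (c^2/(4*b)) = 1 := by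
    rw [← Complex.exp_add, show -c^2/(4*b) + c^2/(4*b) = 0 by ring, Complex.exp_zero]
  have hMain : (1 / (2 * (π:ℂ) * I)) *
      ((∫ x : ℝ, hFun γ ξ w ((x:ℂ) - I/2)) - ∫ x : ℝ, hFun γ ξ w ((x:ℂ) + I/2)) =
      (1/(π:ℂ)) * jacobiTheta₂ (((π:ℂ)*(w:ℂ) - I*(ξ:ℂ))/(2*(π:ℂ))) (I*(γ:ℂ)/(2*(π:ℂ))) := by
    rw [← hTsum, hTheta', hfe]
    set Θ := jacobiTheta₂ (((π:ℂ)*(w:ℂ) - I*(ξ:ℂ))/(2*(π:ℂ))) (I*(γ:ℂ)/(2*(π:ℂ))) with hΘ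
    calc (1 / (2 * (π:ℂ) * I)) * ((2*I*(A * cexp (-c^2/(4*b)))) * (1/A * cexp (c^2/(4*b)) * Θ))
        = (A * A⁻¹) * ((cexp (-c^2/(4*b)) * cexp (c^2/(4*b))) * (((2*I) / (2*(π:ℂ)*I)) * Θ)) := by
          ring
      _ = (1/(π:ℂ)) * Θ := by
          rw [mul_inv_cancel₀ hA0, hcc]
          rw [show (2*I) / (2*(π:ℂ)*I) = 1/(π:ℂ) from by
            field_simp]
          ring
  have hθsum : jacobiTheta₂ (((π:ℂ)*(w:ℂ) - I*(ξ:ℂ))/(2*(π:ℂ))) (I*(γ:ℂ)/(2*(π:ℂ)))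
      = ∑' k : ℤ, cexp (-(γ:ℂ)*(k:ℂ)^2/2 + (ξ:ℂ)*(k:ℂ) + I*(π:ℂ)*(w:ℂ)*(k:ℂ)) := by
    rw [show jacobiTheta₂ (((π:ℂ)*(w:ℂ) - I*(ξ:ℂ))/(2*(π:ℂ))) (I*(γ:ℂ)/(2*(π:ℂ)))
        = ∑' k:ℤ, jacobiTheta₂_term k (((π:ℂ)*(w:ℂ) - I*(ξ:ℂ))/(2*(π:ℂ)))
            (I*(γ:ℂ)/(2*(π:ℂ))) from rfl]
    refine tsum_congr fun k => ?_
    simp only [jacobiTheta₂_term]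
    congr 1
    field_simp
    linear_combination (-2*(k:ℂ)*(ξ:ℂ) + (k:ℂ)^2*(γ:ℂ)) * Complex.I_sq
  exact ⟨hlowInt, hupInt, hMain, by rw [hMain, hθsum]⟩
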